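/- If s > log|λ₂|/τ, then the Hausdorff s-measure of R_τ is zero; consequently dim_H R_τ ≤ log|λ₂|/τ. -/

import Mathlib

/-!
Put `Bₙ = Aⁿ - 1` on `ℝ²`. A point of `R_τ` in a fixed ball lies, for infinitely many `n`, in one
of the sets `Bₙ⁻¹(B(z, e^{-nτ}))`, `z ∈ ℤ²`. Since `A` has distinct real eigenvalues off the unit
circle, `Bₙ⁻¹ = (λ₁ⁿ - 1)⁻¹ P₁ + (λ₂ⁿ - 1)⁻¹ P₂` with the Frobenius covariants `Pᵢ` of `A`, so the
`Bₙ⁻¹` are uniformly bounded and these sets have diameter `≲ e^{-nτ}`. Only `≲ |det Bₙ| ≤ 4|λ₂|ⁿ`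
of them meet the ball: the sets `Bₙ⁻¹(B(z, 1/2))` are disjoint, have volume `|det Bₙ|⁻¹`, and fit
in a slightly larger ball. The `s`-dimensional cost of the `n`-th cover is therefore
`≲ (|λ₂| e^{-τs})ⁿ`, which is summable for `s > log|λ₂|/τ`, and the Hausdorff–Cantelli lemma
gives `μH[s] R_τ = 0`.
-/

open Filter MeasureTheory

noncomputable def intVec (z : Fin 2 → ℤ) : EuclideanSpace ℝ (Fin 2) :=
  (WithLp.equiv 2 (Fin 2 → ℝ)).symm fun i => (z i : ℝ)

/-- The lift to `ℝ²` of the recurrence set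
`R_τ = {x ∈ 𝕋² : Tⁿx ∈ B(x, e^{-nτ}) for infinitely many n}`, where
`T x = A x (mod 1)`:  `Tⁿx ∈ B(x, e^{-nτ})` iff `‖Aⁿx - x - z‖ < e^{-nτ}`
for some `z ∈ ℤ²`. -/
noncomputable def recSet (A : Matrix (Fin 2) (Fin 2) ℤ) (τ : ℝ) :
    Set (EuclideanSpace ℝ (Fin 2)) :=
  {x | ∃ᶠ n : ℕ in atTop, ∃ z : Fin 2 → ℤ,
    ‖Matrix.toEuclideanLin ((A ^ n).map (Int.cast : ℤ → ℝ)) x - x - intVec z‖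
      < Real.exp (-(n : ℝ) * τ)}

open Metric Polynomial Set Topology
open scoped ENNReal

local notation "ℝ²" => EuclideanSpace ℝ (Fin 2)

local notation "toCLM" => Matrix.toEuclideanCLM (n := Fin 2) (𝕜 := ℝ)

section FrobeniusCovariant

variable {𝕜 R : Type*} [Field 𝕜] [Ring R] [Algebra 𝕜 R] {m : R} {a b : 𝕜}

def frobeniusCovariant (m : R) (a b : 𝕜) : R := (a - b)⁻¹ • (m - algebraMap 𝕜 R b)

theorem frobeniusCovariant_add_swap (hab : a ≠ b) :
    frobeniusCovariant m a b + frobeniusCovariant m b a = 1 := by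
  have hba : b - a = -(a - b) := by ring
  rw [frobeniusCovariant, frobeniusCovariant, hba, inv_neg, neg_smul, ← sub_eq_add_neg, ← smul_sub,
    sub_sub_sub_cancel_left, ← map_sub, Algebra.smul_def, ← map_mul,
    inv_mul_cancel₀ (sub_ne_zero.mpr hab), map_one]

theorem frobeniusCovariant_mul_self (hm : aeval m ((X - C a) * (X - C b)) = 0) :
    frobeniusCovariant m a b * m = a • frobeniusCovariant m a b := by
  have hm' : (m - algebraMap 𝕜 R b) * (m - algebraMap 𝕜 R a) = 0 := by
    simpa [mul_comm (X - C a)] using hm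
  rw [frobeniusCovariant, smul_mul_assoc, smul_comm]
  congr 1
  rw [Algebra.smul_def, Algebra.commutes, ← sub_eq_zero, ← mul_sub, hm']

theorem frobeniusCovariant_mul_pow (hm : aeval m ((X - C a) * (X - C b)) = 0) (n : ℕ) :
    frobeniusCovariant m a b * m ^ n = a ^ n • frobeniusCovariant m a b := by
  induction n with
  | zero => simp
  | succ n ih => rw [pow_succ, ← mul_assoc, ih, smul_mul_assoc, frobeniusCovariant_mul_self hm,
      smul_smul, pow_succ]

theorem pow_eq_smul_frobeniusCovariant_add (hab : a ≠ b)
    (hm : aeval m ((X - C a) * (X - C b)) = 0) (n : ℕ) :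
    m ^ n = a ^ n • frobeniusCovariant m a b + b ^ n • frobeniusCovariant m b a := by
  rw [← frobeniusCovariant_mul_pow hm, ← frobeniusCovariant_mul_pow (by rwa [mul_comm]), ← add_mul,
    frobeniusCovariant_add_swap hab, one_mul]

theorem mul_pow_sub_one_eq_one (hab : a ≠ b) (hm : aeval m ((X - C a) * (X - C b)) = 0) {n : ℕ}
    (ha : a ^ n ≠ 1) (hb : b ^ n ≠ 1) :
    ((a ^ n - 1)⁻¹ • frobeniusCovariant m a b + (b ^ n - 1)⁻¹ • frobeniusCovariant m b a) *
      (m ^ n - 1) = 1 := by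
  have hm' : aeval m ((X - C b) * (X - C a)) = 0 := by rwa [mul_comm]
  calc _ = (a ^ n - 1)⁻¹ • (frobeniusCovariant m a b * m ^ n - frobeniusCovariant m a b) +
        (b ^ n - 1)⁻¹ • (frobeniusCovariant m b a * m ^ n - frobeniusCovariant m b a) := by
        simp only [add_mul, mul_sub, smul_mul_assoc, mul_one, smul_sub]
        abel
    _ = frobeniusCovariant m a b + frobeniusCovariant m b a := by
        have cancel (c : 𝕜) (hc : c ≠ 1) (x : R) : (c - 1)⁻¹ • (c • x - x) = x := by
          rw [show c • x - x = (c - 1) • x by rw [sub_smul, one_smul], smul_smul,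
            inv_mul_cancel₀ (sub_ne_zero.mpr hc), one_smul]
        rw [frobeniusCovariant_mul_pow hm, frobeniusCovariant_mul_pow hm', cancel _ ha,
          cancel _ hb]
    _ = 1 := frobeniusCovariant_add_swap hab

end FrobeniusCovariant

theorem abs_sub_one_le_abs_pow_sub_one {x : ℝ} (hx : 0 ≤ x) {n : ℕ} (hn : n ≠ 0) :
    |x - 1| ≤ |x ^ n - 1| := by
  have hgeom : 1 ≤ ∑ i ∈ Finset.range n, x ^ i := by
    simpa using Finset.single_le_sum (fun i _ => pow_nonneg hx i)
      (Finset.mem_range.2 (Nat.pos_of_ne_zero hn))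
  rw [← geom_sum_mul, abs_mul, abs_of_pos (zero_lt_one.trans_le hgeom)]
  exact le_mul_of_one_le_left (abs_nonneg _) hgeom

theorem abs_norm_sub_one_le_norm_pow_sub_one {𝕜 : Type*} [NormedDivisionRing 𝕜] (a : 𝕜) {n : ℕ}
    (hn : n ≠ 0) : |‖a‖ - 1| ≤ ‖a ^ n - 1‖ :=
  calc |‖a‖ - 1| ≤ |‖a‖ ^ n - 1| := abs_sub_one_le_abs_pow_sub_one (norm_nonneg a) hn
    _ = |‖a ^ n‖ - ‖(1 : 𝕜)‖| := by rw [norm_pow, norm_one]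
    _ ≤ ‖a ^ n - 1‖ := abs_norm_sub_norm_le _ _

theorem exists_bounded_left_inverse_pow_sub_one {𝕜 R : Type*} [NormedField 𝕜] [NormedRing R]
    [NormedAlgebra 𝕜 R] {m : R} {a b : 𝕜} (hab : a ≠ b) (ha : ‖a‖ ≠ 1) (hb : ‖b‖ ≠ 1)
    (hm : aeval m ((X - C a) * (X - C b)) = 0) :
    ∃ c, ∀ n ≠ 0, ∃ g : R, g * (m ^ n - 1) = 1 ∧ ‖g‖ ≤ c := by
  refine ⟨‖frobeniusCovariant m a b‖ / |‖a‖ - 1| + ‖frobeniusCovariant m b a‖ / |‖b‖ - 1|,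
    fun n hn => ?_⟩
  have hpos (z : 𝕜) (hz : ‖z‖ ≠ 1) : 0 < ‖z ^ n - 1‖ :=
    (abs_pos.2 (sub_ne_zero.2 hz)).trans_le (abs_norm_sub_one_le_norm_pow_sub_one z hn)
  have hne (z : 𝕜) (hz : ‖z‖ ≠ 1) : z ^ n ≠ 1 := sub_ne_zero.1 (norm_pos_iff.1 (hpos z hz))
  refine ⟨_, mul_pow_sub_one_eq_one hab hm (hne a ha) (hne b hb), ?_⟩
  have hterm (z : 𝕜) (hz : ‖z‖ ≠ 1) (x : R) : ‖(z ^ n - 1)⁻¹ • x‖ ≤ ‖x‖ / |‖z‖ - 1| := by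
    rw [norm_smul, norm_inv, inv_mul_eq_div]
    exact div_le_div_of_nonneg_left (norm_nonneg x) (abs_pos.2 (sub_ne_zero.2 hz))
      (abs_norm_sub_one_le_norm_pow_sub_one z hn)
  exact (norm_add_le _ _).trans (add_le_add (hterm a ha _) (hterm b hb _))

namespace Matrix

theorem aeval_eq_zero_of_trace_det {R : Type*} [CommRing R] [Nontrivial R]
    {M : Matrix (Fin 2) (Fin 2) R} {a b : R} (htr : M.trace = a + b) (hdet : M.det = a * b) :
    aeval M ((X - C a) * (X - C b)) = 0 := by
  have hchar : (X - C a) * (X - C b) = M.charpoly := by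
    rw [charpoly_fin_two, htr, hdet, C_add, C_mul]
    ring
  rw [hchar, aeval_self_charpoly]

theorem det_sub_one_fin_two {R : Type*} [CommRing R] (N : Matrix (Fin 2) (Fin 2) R) :
    (N - 1).det = N.det - N.trace + 1 := by
  simp [det_fin_two, trace_fin_two]
  ring

variable {K : Type*} [Field K] {M : Matrix (Fin 2) (Fin 2) K} {a b : K}

theorem trace_frobeniusCovariant (hab : a ≠ b) (htr : M.trace = a + b) :
    (frobeniusCovariant M a b).trace = 1 := by
  rw [frobeniusCovariant, trace_smul, trace_sub, htr, Algebra.algebraMap_eq_smul_one, trace_smul,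
    trace_one, Fintype.card_fin, smul_eq_mul, smul_eq_mul, Nat.cast_two]
  field_simp [sub_ne_zero.2 hab]
  ring

theorem trace_pow_eq_add (hab : a ≠ b) (htr : M.trace = a + b) (hdet : M.det = a * b) (n : ℕ) :
    (M ^ n).trace = a ^ n + b ^ n := by
  rw [pow_eq_smul_frobeniusCovariant_add hab (aeval_eq_zero_of_trace_det htr hdet), trace_add,
    trace_smul, trace_smul, trace_frobeniusCovariant hab htr,
    trace_frobeniusCovariant hab.symm (htr.trans (add_comm a b)), smul_eq_mul, smul_eq_mul,
    mul_one, mul_one]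

theorem det_pow_sub_one_eq (hab : a ≠ b) (htr : M.trace = a + b) (hdet : M.det = a * b)
    (n : ℕ) : (M ^ n - 1).det = (a ^ n - 1) * (b ^ n - 1) := by
  rw [det_sub_one_fin_two, det_pow, hdet, trace_pow_eq_add hab htr hdet]
  ring

theorem abs_det_pow_sub_one_le {M : Matrix (Fin 2) (Fin 2) ℝ} {a b : ℝ} (hab : a ≠ b)
    (htr : M.trace = a + b) (hdet : M.det = a * b) (ha : |a| ≤ 1) (hb : 1 ≤ |b|) (n : ℕ) :
    |(M ^ n - 1).det| ≤ 4 * |b| ^ n := by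
  rw [det_pow_sub_one_eq hab htr hdet, abs_mul]
  have h₁ : |a ^ n - 1| ≤ 2 := (abs_sub _ _).trans (by
    rw [abs_pow, abs_one]; linarith [pow_le_one₀ (abs_nonneg a) ha (n := n)])
  have h₂ : |b ^ n - 1| ≤ 2 * |b| ^ n := (abs_sub _ _).trans (by
    rw [abs_pow, abs_one]; linarith [one_le_pow₀ hb (n := n)])
  nlinarith [abs_nonneg (a ^ n - 1), abs_nonneg (b ^ n - 1)]

theorem det_toEuclideanCLM {𝕜 n : Type*} [RCLike 𝕜] [Fintype n] [DecidableEq n]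
    (N : Matrix n n 𝕜) : (toEuclideanCLM (n := n) (𝕜 := 𝕜) N).det = N.det := by
  rw [ContinuousLinearMap.det, coe_toEuclideanCLM_eq_toEuclideanLin, LinearMap.det_toLpLin]

end Matrix

section Covering

variable {E : Type*} [NormedAddCommGroup E] [NormedSpace ℝ E] {B G : E →L[ℝ] E} {c : ℝ}

theorem preimage_ball_subset_closedBall (hGB : G * B = 1) (hG : ‖G‖ ≤ c) (y : E) (r : ℝ) :
    B ⁻¹' ball y r ⊆ closedBall (G y) (c * r) := by
  intro x hx
  rw [mem_preimage, mem_ball, dist_eq_norm] at hx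
  have hx' : x - G y = G (B x - y) := by
    rw [map_sub, show G (B x) = x from DFunLike.congr_fun hGB x]
  rw [mem_closedBall, dist_eq_norm, hx']
  calc ‖G (B x - y)‖ ≤ ‖G‖ * ‖B x - y‖ := G.le_opNorm _
    _ ≤ c * r := mul_le_mul hG hx.le (norm_nonneg _) ((norm_nonneg G).trans hG)

theorem ContinuousLinearMap.det_ne_zero_of_mul_eq_one (hGB : G * B = 1) : B.det ≠ 0 := by
  refine right_ne_zero_of_mul_eq_one (a := G.det) ?_
  rw [ContinuousLinearMap.det, ContinuousLinearMap.det, ← LinearMap.det_comp]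
  change LinearMap.det ((G * B : E →L[ℝ] E) : E →ₗ[ℝ] E) = 1
  rw [hGB, ContinuousLinearMap.toLinearMap_one, map_one]

variable [FiniteDimensional ℝ E] [MeasurableSpace E] [BorelSpace E] (μ : Measure E)
  [μ.IsAddHaarMeasure]

theorem ediam_inter_preimage_ball_rpow_mul_le (hGB : G * B = 1) (hG : ‖G‖ ≤ c) {r s : ℝ}
    (hr : r ≤ 1) (hs : 0 < s) (R : ℝ) (y : E) :
    ediam (closedBall 0 R ∩ B ⁻¹' ball y r) ^ s * μ (ball 0 (1 / 2)) ≤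
      ENNReal.ofReal (|B.det| * (2 * c * r) ^ s) *
        μ (closedBall 0 (R + 2 * c) ∩ B ⁻¹' ball y (1 / 2)) := by
  rcases (closedBall 0 R ∩ B ⁻¹' ball y r).eq_empty_or_nonempty with hempty | ⟨x₀, hx₀R, hx₀⟩
  · simp [hempty, ENNReal.zero_rpow_of_pos hs]
  have hr0 : 0 < r := pos_of_mem_ball hx₀
  have hc : 0 ≤ c := (norm_nonneg G).trans hG
  have hsub : B ⁻¹' ball y (1 / 2) ⊆ closedBall 0 (R + 2 * c) := by
    intro x hx
    have hx₁ := preimage_ball_subset_closedBall hGB hG y 1 (ball_subset_ball (by norm_num) hx)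
    have hx₀₁ := preimage_ball_subset_closedBall hGB hG y 1 (ball_subset_ball hr hx₀)
    rw [mem_closedBall] at hx₁ hx₀₁ hx₀R ⊢
    linarith [dist_triangle x (G y) 0, dist_triangle_left (G y) 0 x₀]
  have hdiam : ediam (closedBall 0 R ∩ B ⁻¹' ball y r) ≤ ENNReal.ofReal (2 * c * r) := by
    refine ediam_le_of_forall_dist_le fun x hx x' hx' => ?_
    have h := preimage_ball_subset_closedBall hGB hG y r hx.2
    have h' := preimage_ball_subset_closedBall hGB hG y r hx'.2
    rw [mem_closedBall] at h h'
    linarith [dist_triangle_right x x' (G y)]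
  have hdet := ContinuousLinearMap.det_ne_zero_of_mul_eq_one hGB
  -- `μ (B ⁻¹' ball y (1 / 2)) = |det B|⁻¹ * μ (ball 0 (1 / 2))` cancels the factor `|det B|`
  rw [inter_eq_right.2 hsub, Measure.addHaar_preimage_continuousLinearMap μ hdet,
    Measure.addHaar_ball_center μ y, ← mul_assoc,
    ← ENNReal.ofReal_mul (by positivity), abs_inv, mul_right_comm,
    mul_inv_cancel₀ (abs_pos.2 hdet).ne', one_mul,
    ← ENNReal.ofReal_rpow_of_nonneg (by positivity) hs.le]
  gcongr

theorem tsum_ediam_inter_preimage_ball_rpow_mul_le {ι : Type*} [Countable ι] {p : ι → E}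
    (hp : Pairwise fun i j => 1 ≤ dist (p i) (p j)) (hGB : G * B = 1) (hG : ‖G‖ ≤ c) {r s : ℝ}
    (hr : r ≤ 1) (hs : 0 < s) (R : ℝ) :
    (∑' i, ediam (closedBall 0 R ∩ B ⁻¹' ball (p i) r) ^ s) * μ (ball 0 (1 / 2)) ≤
      ENNReal.ofReal (|B.det| * (2 * c * r) ^ s) * μ (closedBall 0 (R + 2 * c)) := by
  set T := fun i => closedBall 0 (R + 2 * c) ∩ B ⁻¹' ball (p i) (1 / 2)
  have hmeas (i : ι) : MeasurableSet (T i) :=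
    measurableSet_closedBall.inter (B.continuous.measurable measurableSet_ball)
  have hdisj : Pairwise (Function.onFun Disjoint T) := fun i j hij =>
    ((ball_disjoint_ball (δ := 1 / 2) (ε := 1 / 2) (by linarith [hp hij])).preimage B).mono
      inter_subset_right inter_subset_right
  calc (∑' i, ediam (closedBall 0 R ∩ B ⁻¹' ball (p i) r) ^ s) * μ (ball 0 (1 / 2))
      = ∑' i, ediam (closedBall 0 R ∩ B ⁻¹' ball (p i) r) ^ s * μ (ball 0 (1 / 2)) :=
        ENNReal.tsum_mul_right.symm
    _ ≤ ∑' i, ENNReal.ofReal (|B.det| * (2 * c * r) ^ s) * μ (T i) :=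
        ENNReal.tsum_le_tsum fun i =>
          ediam_inter_preimage_ball_rpow_mul_le μ hGB hG hr hs R (p i)
    _ = ENNReal.ofReal (|B.det| * (2 * c * r) ^ s) * ∑' i, μ (T i) :=
        ENNReal.tsum_mul_left
    _ ≤ ENNReal.ofReal (|B.det| * (2 * c * r) ^ s) * μ (closedBall 0 (R + 2 * c)) := by
        gcongr
        exact (tsum_meas_le_meas_iUnion_of_disjoint μ hmeas hdisj).trans
          (measure_mono (iUnion_subset fun i => inter_subset_left))

end Covering

theorem hausdorffMeasure_limsup_iUnion_eq_zero {X ι : Type*} [EMetricSpace X] [MeasurableSpace X]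
    [BorelSpace X] [Countable ι] {s : ℝ} (hs : 0 < s) (U : ℕ → ι → Set X)
    (hU : ∑' n, ∑' i, ediam (U n i) ^ s ≠ ∞) :
    μH[s] (limsup (fun n => ⋃ i, U n i) atTop) = 0 := by
  set T : ℕ → ℝ≥0∞ := fun N => ∑' m, ∑' i, ediam (U (m + N) i) ^ s
  have hT : Tendsto T atTop (𝓝 0) := ENNReal.tendsto_sum_nat_add _ hU
  have hdiam (N m : ℕ) (i : ι) : ediam (U (m + N) i) ≤ T N ^ s⁻¹ := by
    rw [← ENNReal.rpow_le_rpow_iff hs, ← ENNReal.rpow_mul, inv_mul_cancel₀ hs.ne',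
      ENNReal.rpow_one]
    exact (ENNReal.le_tsum i).trans
      (ENNReal.le_tsum (f := fun m => ∑' i, ediam (U (m + N) i) ^ s) m)
  have hr : Tendsto (fun N => T N ^ s⁻¹) atTop (𝓝 0) := by
    have h := ((ENNReal.continuous_rpow_const (y := s⁻¹)).tendsto 0).comp hT
    rwa [ENNReal.zero_rpow_of_pos (inv_pos.2 hs)] at h
  have hcover (N : ℕ) : limsup (fun n => ⋃ i, U n i) atTop ⊆ ⋃ mi : ℕ × ι, U (mi.1 + N) mi.2 := by
    intro x hx
    obtain ⟨n, hn, hxn⟩ := frequently_atTop.1 (mem_limsup_iff_frequently_mem.1 hx) N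
    obtain ⟨i, hi⟩ := mem_iUnion.1 hxn
    exact mem_iUnion.2 ⟨(n - N, i), by rwa [Nat.sub_add_cancel hn]⟩
  refine le_antisymm ?_ zero_le
  calc μH[s] (limsup (fun n => ⋃ i, U n i) atTop)
      ≤ liminf (fun N => ∑' mi : ℕ × ι, ediam (U (mi.1 + N) mi.2) ^ s) atTop :=
        Measure.hausdorffMeasure_le_liminf_tsum s _ _ hr _
          (Eventually.of_forall fun N mi => hdiam N mi.1 mi.2) (Eventually.of_forall hcover)
    _ = 0 := by
        simp_rw [ENNReal.tsum_prod']
        exact hT.liminf_eq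

theorem one_le_dist_intVec {z z' : Fin 2 → ℤ} (h : z ≠ z') : 1 ≤ dist (intVec z) (intVec z') := by
  obtain ⟨i, hi⟩ := Function.ne_iff.1 h
  calc (1 : ℝ) ≤ |((z i - z' i : ℤ) : ℝ)| := by exact_mod_cast Int.one_le_abs (sub_ne_zero.2 hi)
    _ = dist (intVec z i) (intVec z' i) := by push_cast; exact (Real.dist_eq _ _).symm
    _ ≤ dist (intVec z) (intVec z') := PiLp.dist_apply_le _ _ i

theorem recSet_inter_closedBall_subset_limsup (A : Matrix (Fin 2) (Fin 2) ℤ) (τ R : ℝ) :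
    recSet A τ ∩ closedBall 0 R ⊆ limsup (fun n : ℕ => ⋃ z, closedBall 0 R ∩
      toCLM (A.map (Int.cast : ℤ → ℝ) ^ n - 1) ⁻¹' ball (intVec z) (Real.exp (-n * τ))) atTop := by
  rintro x ⟨hx, hxR⟩
  refine mem_limsup_iff_frequently_mem.2 (hx.mono fun n ⟨z, hz⟩ => mem_iUnion.2 ⟨z, hxR, ?_⟩)
  have hpow : (A ^ n).map (Int.cast : ℤ → ℝ) = A.map Int.cast ^ n :=
    map_pow (Int.castRingHom ℝ).mapMatrix A n
  rw [hpow] at hz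
  rwa [mem_preimage, mem_ball, dist_eq_norm, map_sub, map_one]

theorem tsum_ediam_rpow_mul_le_geometric {M : Matrix (Fin 2) (Fin 2) ℝ} {a b c τ s : ℝ}
    (hab : a ≠ b) (htr : M.trace = a + b) (hdet : M.det = a * b) (ha : |a| ≤ 1) (hb : 1 ≤ |b|)
    (hc : ∀ n ≠ 0, ∃ G, G * (toCLM M ^ n - 1) = 1 ∧ ‖G‖ ≤ c) (hτ : 0 ≤ τ) (hs : 0 < s) (R : ℝ)
    {n : ℕ} (hn : n ≠ 0) :
    (∑' z, ediam (closedBall 0 R ∩ toCLM (M ^ n - 1) ⁻¹' ball (intVec z) (Real.exp (-n * τ))) ^ s) *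
        volume (ball (0 : ℝ²) (1 / 2)) ≤
      ENNReal.ofReal (4 * (2 * c) ^ s * (|b| * Real.exp (-τ * s)) ^ n) *
        volume (closedBall (0 : ℝ²) (R + 2 * c)) := by
  obtain ⟨G, hGB, hG⟩ := hc n hn
  have hc0 : 0 ≤ c := (norm_nonneg G).trans hG
  replace hGB : G * toCLM (M ^ n - 1) = 1 := by rwa [map_sub, map_pow, map_one]
  have hr : Real.exp (-n * τ) ≤ 1 := Real.exp_le_one_iff.2 (by nlinarith [n.cast_nonneg (α := ℝ)])
  refine (tsum_ediam_inter_preimage_ball_rpow_mul_le volume (fun z z' h => one_le_dist_intVec h)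
    hGB hG hr hs R).trans ?_
  gcongr ENNReal.ofReal ?_ * _
  rw [Matrix.det_toEuclideanCLM]
  calc |(M ^ n - 1).det| * (2 * c * Real.exp (-n * τ)) ^ s
      ≤ 4 * |b| ^ n * ((2 * c) ^ s * Real.exp (-n * τ) ^ s) := by
        rw [Real.mul_rpow (by positivity) (Real.exp_pos _).le]
        gcongr
        exact Matrix.abs_det_pow_sub_one_le hab htr hdet ha hb n
    _ = 4 * (2 * c) ^ s * (|b| * Real.exp (-τ * s)) ^ n := by
        rw [← Real.exp_mul, mul_pow, ← Real.exp_nat_mul]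
        ring_nf

theorem hausdorffMeasure_recSet_inter_closedBall_eq_zero (A : Matrix (Fin 2) (Fin 2) ℤ)
    {a b τ s : ℝ} (htr : a + b = (A.trace : ℝ)) (hdet : a * b = (A.det : ℝ)) (ha : |a| < 1)
    (hb : 1 < |b|) (hτ : 0 < τ) (hs : Real.log |b| / τ < s) (R : ℝ) :
    μH[s] (recSet A τ ∩ closedBall 0 R) = 0 := by
  set M := A.map (Int.cast : ℤ → ℝ)
  have hab : a ≠ b := by rintro rfl; linarith
  have hMtr : M.trace = a + b := by
    rw [htr]; exact (AddMonoidHom.map_trace (Int.castAddHom ℝ) A).symm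
  have hMdet : M.det = a * b := by rw [hdet]; exact ((Int.castRingHom ℝ).map_det A).symm
  have hs0 : 0 < s := (div_pos (Real.log_pos hb) hτ).trans hs
  obtain ⟨c, hc⟩ := exists_bounded_left_inverse_pow_sub_one (m := toCLM M) hab
    (by rw [Real.norm_eq_abs]; exact ha.ne) (by rw [Real.norm_eq_abs]; exact hb.ne')
    (by rw [aeval_algHom_apply, Matrix.aeval_eq_zero_of_trace_det hMtr hMdet, map_zero])
  have hθ : |b| * Real.exp (-τ * s) < 1 := by
    rw [div_lt_iff₀ hτ] at hs
    rw [← Real.exp_log (one_pos.trans hb), ← Real.exp_add, Real.exp_lt_one_iff]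
    linarith
  set U : ℕ → (Fin 2 → ℤ) → Set (ℝ²) := fun n z => closedBall 0 R ∩
    toCLM (M ^ n - 1) ⁻¹' ball (intVec z) (Real.exp (-n * τ))
  -- shifted by one because `B₀ = 0` has no inverse
  have hsum : ∑' n, ∑' z, ediam (U (n + 1) z) ^ s ≠ ∞ := by
    have hlevel (n : ℕ) := tsum_ediam_rpow_mul_le_geometric hab hMtr hMdet ha.le hb.le hc hτ.le hs0
      R (Nat.add_one_ne_zero n)
    have hgeom : Summable fun n : ℕ => 4 * (2 * c) ^ s * (|b| * Real.exp (-τ * s)) ^ (n + 1) :=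
      ((summable_nat_add_iff 1).2 (summable_geometric_of_lt_one (by positivity) hθ)).mul_left _
    have hball : volume (ball (0 : ℝ²) (1 / 2)) ≠ 0 := (measure_ball_pos _ _ one_half_pos).ne'
    refine (ENNReal.lt_top_of_mul_ne_top_left ?_ hball).ne
    rw [← ENNReal.tsum_mul_right]
    refine ne_top_of_le_ne_top ?_ (ENNReal.tsum_le_tsum hlevel)
    rw [ENNReal.tsum_mul_right]
    exact ENNReal.mul_ne_top hgeom.tsum_ofReal_ne_top measure_closedBall_lt_top.ne
  have hnull := hausdorffMeasure_limsup_iUnion_eq_zero hs0 (fun n => U (n + 1)) hsum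
  rw [limsup_nat_add (fun n => ⋃ z, U n z) 1] at hnull
  exact measure_mono_null (recSet_inter_closedBall_subset_limsup A τ R) hnull

theorem hausdorffMeasure_recSet_eq_zero_general (A : Matrix (Fin 2) (Fin 2) ℤ)
    (l₁ l₂ : ℝ)
    (hsum : l₁ + l₂ = (A.trace : ℝ)) (hprod : l₁ * l₂ = (A.det : ℝ))
    (h1 : |l₁| < 1) (h2 : 1 < |l₂|)
    (τ : ℝ) (hτ : 0 < τ) :
    (∀ s : ℝ, Real.log |l₂| / τ < s → μH[s] (recSet A τ) = 0) ∧
    dimH (recSet A τ) ≤ ENNReal.ofReal (Real.log |l₂| / τ) := by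
  have hnull (s : ℝ) (hs : Real.log |l₂| / τ < s) : μH[s] (recSet A τ) = 0 := by
    rw [← inter_univ (recSet A τ), ← iUnion_closedBall_nat 0, inter_iUnion]
    exact measure_iUnion_null fun R =>
      hausdorffMeasure_recSet_inter_closedBall_eq_zero A hsum hprod h1 h2 hτ hs R
  refine ⟨hnull, dimH_le fun d hd => not_lt.1 fun hlt => ?_⟩
  rw [ENNReal.ofReal_lt_iff_lt_toReal (div_nonneg (Real.log_nonneg h2.le) hτ.le)
    ENNReal.coe_ne_top, ENNReal.coe_toReal] at hlt
  simp [hnull d hlt] at hd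

/-- If `s > log|λ₂|/τ` then the `s`-dimensional Hausdorff measure of `R_τ` is
zero; consequently `dim_H R_τ ≤ log|λ₂|/τ`. -/
theorem hausdorffMeasure_recSet_eq_zero (A : Matrix (Fin 2) (Fin 2) ℤ)
    (l₁ l₂ : ℝ)
    (hsum : l₁ + l₂ = (A.trace : ℝ)) (hprod : l₁ * l₂ = (A.det : ℝ))
    (h0 : 0 < |l₁|) (h1 : |l₁| < 1) (h2 : 1 < |l₂|)
    (τ : ℝ) (hτ : 0 < τ) :
    (∀ s : ℝ, Real.log |l₂| / τ < s → μH[s] (recSet A τ) = 0) ∧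
    dimH (recSet A τ) ≤ ENNReal.ofReal (Real.log |l₂| / τ) :=
  hausdorffMeasure_recSet_eq_zero_general A l₁ l₂ hsum hprod h1 h2 τ hτ
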